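/- Let M=(E,ρ) be a q-matroid and V ≤ E a subspace. Then dim V − ρ(V) = dim cyc(V) − ρ(cyc(V)). Moreover, if V = cyc(V) ⊕ W, then ρ(V) = ρ(cyc(V)) + dim W and W is independent. -/

import Mathlib

open Submodule Module

namespace QM

variable (F : Type*) {E : Type*} [Field F] [AddCommGroup E] [Module F E]

/-- The rank axioms (R1)-(R3) of a q-matroid. -/
def IsRkFn (ρ : Submodule F E → ℕ) : Prop :=
  (∀ V : Submodule F E, ρ V ≤ finrank F V) ∧
  (∀ ⦃V W : Submodule F E⦄, V ≤ W → ρ V ≤ ρ W) ∧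
  (∀ V W : Submodule F E, ρ (V ⊔ W) + ρ (V ⊓ W) ≤ ρ V + ρ W)

variable {F}

/-- Independent spaces. -/
def Indep (ρ : Submodule F E → ℕ) (V : Submodule F E) : Prop := ρ V = finrank F V

/-- Circuits: dependent spaces all of whose proper subspaces are independent. -/
def IsCircuit (ρ : Submodule F E → ℕ) (C : Submodule F E) : Prop :=
  ¬ Indep ρ C ∧ ∀ D : Submodule F E, D < C → Indep ρ D

/-- Open spaces: sums of circuits. -/
def IsOpenSp (ρ : Submodule F E → ℕ) (V : Submodule F E) : Prop :=
  ∃ S : Set (Submodule F E), (∀ C ∈ S, IsCircuit ρ C) ∧ V = sSup S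

/-- The cyclic core: the sum of all circuits contained in `V`. -/
def cyc (ρ : Submodule F E → ℕ) (V : Submodule F E) : Submodule F E :=
  sSup {C : Submodule F E | IsCircuit ρ C ∧ C ≤ V}

/-- The closure operator: the sum of all `⟨x⟩` with `ρ(V + ⟨x⟩) = ρ V`. -/
def cl (ρ : Submodule F E → ℕ) (V : Submodule F E) : Submodule F E :=
  sSup {W : Submodule F E | ∃ x : E, ρ (V ⊔ span F {x}) = ρ V ∧ W = span F {x}}

/-- Flats. -/
def IsFlat (ρ : Submodule F E → ℕ) (V : Submodule F E) : Prop :=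
  ∀ x : E, x ∉ V → ρ V < ρ (V ⊔ span F {x})

/-- Cyclic flats. -/
def CyclicFlat (ρ : Submodule F E → ℕ) (V : Submodule F E) : Prop :=
  IsFlat ρ V ∧ IsOpenSp ρ V

end QM

/-!
The nullity `dim V - ρ V` is monotone, and it does not drop from `V` to a hyperplane `H ⊇ cyc V`:
if it did, then `ρ H = ρ V`, and a basis `I` of `H` together with a vector `x ∈ V \ H` would span a
dependent space. A circuit inside it lies in `cyc V ≤ H`, hence in `(I + ⟨x⟩) ∩ H = I`, which is
impossible as `I` is independent. Descending through hyperplanes from `V` to `cyc V` gives the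
equality of nullities; for a complement `W` of `cyc V`, submodularity `ρ V ≤ ρ (cyc V) + ρ W`
then forces `ρ W = dim W`.
-/

theorem Submodule.finrank_add_one_of_covBy {K V : Type*} [DivisionRing K] [AddCommGroup V]
    [Module K V] [FiniteDimensional K V] {H U : Submodule K V} (h : H ⋖ U) :
    finrank K H + 1 = finrank K U := by
  obtain ⟨x, hxU, hxH⟩ := SetLike.exists_of_lt h.lt
  have hsup : H ⊔ span K {x} = U := by
    refine (h.eq_or_eq le_sup_left (sup_le h.le ((span_singleton_le_iff_mem x U).2 hxU)))
      |>.resolve_left fun e => hxH (e ▸ mem_sup_right (mem_span_singleton_self x))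
  rw [← hsup, finrank_sup_span_singleton hxH]

namespace QM

section

variable {F E : Type*} [Field F] [AddCommGroup E] [Module F E] {ρ : Submodule F E → ℕ}
  {A B C H I V : Submodule F E}

theorem cyc_le (ρ : Submodule F E → ℕ) (V : Submodule F E) : cyc ρ V ≤ V :=
  sSup_le fun _ hC => hC.2

theorem IsCircuit.le_cyc (hC : IsCircuit ρ C) (hCV : C ≤ V) : C ≤ cyc ρ V :=
  le_sSup ⟨hC, hCV⟩

theorem cyc_eq_of_cyc_le_of_le (hH : cyc ρ V ≤ H) (hHV : H ≤ V) : cyc ρ H = cyc ρ V :=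
  le_antisymm (sSup_le fun _ hC => hC.1.le_cyc (hC.2.trans hHV))
    (sSup_le fun _ hC => hC.1.le_cyc (hC.1.le_cyc hC.2 |>.trans hH))

theorem IsRkFn.rank_bot (hρ : IsRkFn F ρ) : ρ ⊥ = 0 :=
  Nat.le_zero.1 (finrank_bot F E ▸ hρ.1 ⊥)

theorem IsRkFn.rank_sup_eq_of_rank_eq (hρ : IsRkFn F ρ) (hIA : I ≤ A) (hIB : I ≤ B)
    (hA : ρ A = ρ I) (hB : ρ B = ρ I) : ρ (A ⊔ B) = ρ I := by
  have hsub := hρ.2.2 A B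
  have hinf := hρ.2.1 (le_inf hIA hIB)
  have hsup := hρ.2.1 (hIA.trans (le_sup_left : A ≤ A ⊔ B))
  omega

end

section

variable {F E : Type*} [Field F] [AddCommGroup E] [Module F E] [FiniteDimensional F E]
  {ρ : Submodule F E → ℕ} {A B H I V : Submodule F E}

theorem exists_isCircuit_le (hV : ¬ Indep ρ V) : ∃ C, IsCircuit ρ C ∧ C ≤ V := by
  obtain ⟨C, ⟨hCV, hC⟩, hmin⟩ :=
    wellFounded_lt.has_min {D : Submodule F E | D ≤ V ∧ ¬ Indep ρ D} ⟨V, le_rfl, hV⟩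
  exact ⟨C, ⟨hC, fun D hDC => by_contra fun hD => hmin D ⟨hDC.le.trans hCV, hD⟩ hDC⟩, hCV⟩

theorem IsRkFn.rank_add_finrank_le_of_le (hρ : IsRkFn F ρ) (hAB : A ≤ B) :
    ρ B + finrank F A ≤ ρ A + finrank F B := by
  obtain ⟨A', hA'⟩ := Submodule.exists_isCompl A
  have hinf : A ⊓ (A' ⊓ B) = ⊥ := by rw [← inf_assoc, hA'.inf_eq_bot, bot_inf_eq]
  have hsup : A ⊔ A' ⊓ B = B := by
    rw [← sup_inf_assoc_of_le A' hAB, hA'.sup_eq_top, top_inf_eq]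
  have hdim := finrank_sup_add_finrank_inf_eq A (A' ⊓ B)
  have hsub := hρ.2.2 A (A' ⊓ B)
  rw [hinf, hsup, finrank_bot] at hdim
  rw [hinf, hsup, hρ.rank_bot] at hsub
  have hA'B := hρ.1 (A' ⊓ B)
  omega

theorem Indep.of_le (hρ : IsRkFn F ρ) (hV : Indep ρ V) (hAV : A ≤ V) : Indep ρ A := by
  have hle := hρ.rank_add_finrank_le_of_le hAV
  have hA := hρ.1 A
  unfold Indep at *
  omega

theorem IsRkFn.exists_indep_le_rank_eq (hρ : IsRkFn F ρ) (V : Submodule F E) :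
    ∃ I ≤ V, Indep ρ I ∧ ρ I = ρ V := by
  obtain ⟨I, ⟨hIV, hI⟩, hmax⟩ :=
    wellFounded_gt.has_min {I : Submodule F E | I ≤ V ∧ Indep ρ I} ⟨⊥, bot_le, by
      rw [Indep, hρ.rank_bot, finrank_bot]⟩
  have hline : ∀ x ∈ V, ρ (I ⊔ span F {x}) = ρ I := by
    intro x hx
    have hJV : I ⊔ span F {x} ≤ V := sup_le hIV ((span_singleton_le_iff_mem x V).2 hx)
    by_cases hxI : x ∈ I
    · rw [sup_eq_left.2 ((span_singleton_le_iff_mem x I).2 hxI)]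
    have hIJ : I < I ⊔ span F {x} :=
      lt_of_le_of_ne le_sup_left fun h => hxI (h ▸ mem_sup_right (mem_span_singleton_self x))
    have hdep : ¬ Indep ρ (I ⊔ span F {x}) := fun hJ => hmax _ ⟨hJV, hJ⟩ hIJ
    have hdimJ := finrank_sup_span_singleton hxI
    have hJ := hρ.1 (I ⊔ span F {x})
    have hmono := hρ.2.1 hIJ.le
    unfold Indep at hI hdep
    omega
  let S := {A : Submodule F E | I ≤ A ∧ A ≤ V ∧ ρ A = ρ I}
  have hS : sSup S ∈ S := by
    refine CompleteLattice.WellFoundedGT.isSupClosedCompact _ inferInstance S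
      ⟨I, le_rfl, hIV, rfl⟩ ?_
    rintro A ⟨hIA, hAV, hA⟩ B ⟨hIB, hBV, hB⟩
    exact ⟨hIA.trans le_sup_left, sup_le hAV hBV, hρ.rank_sup_eq_of_rank_eq hIA hIB hA hB⟩
  have hVS : V ≤ sSup S := fun x hx =>
    le_sSup (s := S) ⟨le_sup_left, sup_le hIV ((span_singleton_le_iff_mem x V).2 hx), hline x hx⟩
      (mem_sup_right (mem_span_singleton_self x))
  exact ⟨I, hIV, hI, by rw [← le_antisymm hS.2.1 hVS, hS.2.2]⟩

theorem IsRkFn.rank_lt_of_cyc_le_of_lt (hρ : IsRkFn F ρ) (hH : cyc ρ V ≤ H) (hHV : H < V) :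
    ρ H < ρ V := by
  refine (hρ.2.1 hHV.le).lt_of_ne fun hrk => ?_
  obtain ⟨I, hIH, hI, hIrk⟩ := hρ.exists_indep_le_rank_eq H
  obtain ⟨x, hxV, hxH⟩ := SetLike.exists_of_lt hHV
  have hJV : I ⊔ span F {x} ≤ V :=
    sup_le (hIH.trans hHV.le) ((span_singleton_le_iff_mem x V).2 hxV)
  have hdep : ¬ Indep ρ (I ⊔ span F {x}) := by
    have hdimJ := finrank_sup_span_singleton fun hxI => hxH (hIH hxI)
    have hJ := hρ.2.1 hJV
    unfold Indep at *
    omega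
  obtain ⟨C, hC, hCJ⟩ := exists_isCircuit_le hdep
  have hJH : (I ⊔ span F {x}) ⊓ H = I := by
    rw [sup_inf_assoc_of_le _ hIH, inf_comm, disjoint_iff.1 ((disjoint_span_singleton' ?_).2 hxH),
      sup_bot_eq]
    rintro rfl
    exact hxH H.zero_mem
  exact hC.1 (hI.of_le hρ (hJH ▸ le_inf hCJ ((hC.le_cyc (hCJ.trans hJV)).trans hH)))

theorem IsRkFn.rank_add_finrank_cyc (hρ : IsRkFn F ρ) (V : Submodule F E) :
    ρ V + finrank F (cyc ρ V) = ρ (cyc ρ V) + finrank F V := by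
  induction V using WellFoundedLT.induction with
  | ind V ih =>
    rcases (cyc_le ρ V).eq_or_lt with hV | hV
    · rw [hV]
    obtain ⟨H, hH, hHV⟩ := exists_le_covBy_of_lt hV
    have hih := ih H hHV.lt
    rw [cyc_eq_of_cyc_le_of_le hH hHV.le] at hih
    have hdim := Submodule.finrank_add_one_of_covBy hHV
    have hlt := hρ.rank_lt_of_cyc_le_of_lt hH hHV.lt
    have hle := hρ.rank_add_finrank_le_of_le hHV.le
    omega

end

variable {F E : Type*} [Field F] [Fintype F] [AddCommGroup E] [Module F E]
  [FiniteDimensional F E]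

theorem stmt5 (ρ : Submodule F E → ℕ) (hρ : IsRkFn F ρ) (V : Submodule F E) :
    finrank F V - ρ V = finrank F ↥(cyc ρ V) - ρ (cyc ρ V) ∧
    (∀ W : Submodule F E, cyc ρ V ⊓ W = ⊥ → cyc ρ V ⊔ W = V →
      ρ V = ρ (cyc ρ V) + finrank F W ∧ Indep ρ W) := by
  have hnull := hρ.rank_add_finrank_cyc V
  have hV := hρ.1 V
  have hcyc := hρ.1 (cyc ρ V)
  refine ⟨by omega, fun W hinf hsup => ?_⟩
  have hdim := finrank_sup_add_finrank_inf_eq (cyc ρ V) W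
  rw [hinf, hsup, finrank_bot] at hdim
  have hsub := hρ.2.2 (cyc ρ V) W
  rw [hinf, hsup, hρ.rank_bot] at hsub
  have hW := hρ.1 W
  exact ⟨by omega, by unfold Indep; omega⟩

end QM
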